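/- The split orthogonal group O_q(2n,2n) (the isometry group of a non-degenerate split symmetric bilinear form of rank 4n over F_q) is isomorphic to SL_~^-(2, M_{2n}(F_q)), where the involution ~ on M_{2n}(F_q) is given by a~ = J_{2n} aᵗ J_{2n}⁻¹ with J_{2n} = [[0,I_n],[-I_n,0]]. -/

import Mathlib

open Matrix

/-- `J_{2n} = [[0,Iₙ],[-Iₙ,0]] ∈ M_{2n}(F)`. -/
def Jn (F : Type) [Field F] (n : ℕ) : Matrix (Fin n ⊕ Fin n) (Fin n ⊕ Fin n) F :=
  fromBlocks 0 1 (-1) 0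

/-- The involution `a~ = J_{2n} aᵗ J_{2n}⁻¹` on `M_{2n}(F)`. -/
noncomputable def tilde {F : Type} [Field F] {n : ℕ}
    (a : Matrix (Fin n ⊕ Fin n) (Fin n ⊕ Fin n) F) :
    Matrix (Fin n ⊕ Fin n) (Fin n ⊕ Fin n) F :=
  Jn F n * aᵀ * (Jn F n)⁻¹

/-- The extension of an involution `τ` on `A` to `M₂(A)`. -/
def invM₂ {A : Type} (τ : A → A) (T : Matrix (Fin 2) (Fin 2) A) : Matrix (Fin 2) (Fin 2) A :=
  (T.map τ)ᵀ

/-!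
Since `a~ = J aᵗ J⁻¹`, the involution `~` on `M₂(A)` is the block transpose `⋄` conjugated by
`D = diag(J, J)`, so `T J₋ T~ = J₋` says that `T` preserves the symmetric form `J₋ D` with respect
to `⋄`. This form is congruent to `J₊` by a matrix `P` with `P P⋄ = 1`, and conjugation by `P`
carries the `⋄`-isometries of `J₊` onto the `~`-isometries of `J₋`.
-/

theorem isometry_iff_conj_isometry {R : Type*} [Monoid R] {σ τ : R → R}
    (hσ_mul : ∀ x y, σ (x * y) = σ y * σ x) (hσ_one : σ 1 = 1)
    (D : Rˣ) (hτ : ∀ x, τ x = D * σ x * ↑D⁻¹) {J J' : R} (P : Rˣ)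
    (hP : P * J * σ P = J' * D) (T : R) :
    T * J * σ T = J ↔ P * T * ↑P⁻¹ * J' * τ (P * T * ↑P⁻¹) = J' := by
  have hσP : σ P * σ ↑P⁻¹ = 1 := by rw [← hσ_mul, P.inv_mul, hσ_one]
  have hJ' : J' = P * J * σ P * ↑D⁻¹ := by rw [hP, Units.mul_inv_cancel_right]
  have hJ : ↑P⁻¹ * J' * D * σ ↑P⁻¹ = J := by
    rw [mul_assoc _ J', hP.symm]
    simp only [mul_assoc, hσP, Units.inv_mul_cancel_left, mul_one]
  have hconj :
      P * T * ↑P⁻¹ * J' * τ (P * T * ↑P⁻¹) = P * (T * J * σ T) * σ P * ↑D⁻¹ := by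
    rw [hτ, hσ_mul, hσ_mul, ← hJ]
    simp only [mul_assoc]
  let Q : Rˣ := ⟨σ P, σ ↑P⁻¹, hσP, by rw [← hσ_mul, P.mul_inv, hσ_one]⟩
  rw [hconj, hJ']
  change _ ↔ P * _ * (Q : R) * _ = P * J * (Q : R) * _
  rw [Units.mul_left_inj, Units.mul_left_inj, Units.mul_right_inj]

section invM₂

variable {A : Type} {τ : A → A}

theorem invM₂_mul [NonUnitalNonAssocSemiring A] (hτ_add : ∀ a b, τ (a + b) = τ a + τ b)
    (hτ_mul : ∀ a b, τ (a * b) = τ b * τ a)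
    (X Y : Matrix (Fin 2) (Fin 2) A) : invM₂ τ (X * Y) = invM₂ τ Y * invM₂ τ X := by
  ext i j
  simp [invM₂, mul_apply, Fin.sum_univ_two, hτ_add, hτ_mul]

theorem invM₂_one [Semiring A] (hτ_zero : τ 0 = 0) (hτ_one : τ 1 = 1) :
    invM₂ τ (1 : Matrix (Fin 2) (Fin 2) A) = 1 := by
  ext i j
  fin_cases i <;> fin_cases j <;> simp [invM₂, hτ_zero, hτ_one]

theorem invM₂_conj [Semiring A] (u v : A) (S : Matrix (Fin 2) (Fin 2) A) :
    invM₂ (fun a => u * τ a * v) S = scalar (Fin 2) u * invM₂ τ S * scalar (Fin 2) v := by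
  ext i j
  simp [invM₂, scalar_apply]

theorem invM₂_transpose_mul {m R : Type} [Fintype m] [CommSemiring R]
    (X Y : Matrix (Fin 2) (Fin 2) (Matrix m m R)) :
    invM₂ transpose (X * Y) = invM₂ transpose Y * invM₂ transpose X :=
  invM₂_mul transpose_add transpose_mul X Y

end invM₂

section Split

variable {F : Type} [Field F] {n : ℕ}

theorem Jn_mul_self : Jn F n * Jn F n = -1 := by
  simp [Jn, fromBlocks_multiply, ← fromBlocks_one, fromBlocks_neg]

def unitJn (F : Type) [Field F] (n : ℕ) : (Matrix (Fin n ⊕ Fin n) (Fin n ⊕ Fin n) F)ˣ :=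
  ⟨Jn F n, -Jn F n, by rw [mul_neg, Jn_mul_self, neg_neg],
    by rw [neg_mul, Jn_mul_self, neg_neg]⟩

def scalarUnitJn (F : Type) [Field F] (n : ℕ) :
    (Matrix (Fin 2) (Fin 2) (Matrix (Fin n ⊕ Fin n) (Fin n ⊕ Fin n) F))ˣ :=
  Units.map (scalar (Fin 2)).toMonoidHom (unitJn F n)

theorem invM₂_tilde (S : Matrix (Fin 2) (Fin 2) (Matrix (Fin n ⊕ Fin n) (Fin n ⊕ Fin n) F)) :
    invM₂ tilde S =
      (scalarUnitJn F n).val * invM₂ transpose S * (scalarUnitJn F n)⁻¹.val := by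
  rw [scalarUnitJn, Units.coe_map, Units.coe_map_inv, coe_units_inv]
  exact invM₂_conj _ _ S

-- As a `4n × 4n` matrix this is a signed permutation matrix, hence `⋄`-orthogonal.
def splitP (F : Type) [Field F] (n : ℕ) :
    Matrix (Fin 2) (Fin 2) (Matrix (Fin n ⊕ Fin n) (Fin n ⊕ Fin n) F) :=
  !![fromBlocks 1 0 0 0, fromBlocks 0 0 0 1; fromBlocks 0 (-1) 0 0, fromBlocks 0 0 1 0]

theorem splitP_mul_invM₂ : splitP F n * invM₂ transpose (splitP F n) = 1 := by
  ext1 i j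
  fin_cases i <;> fin_cases j <;>
    simp [splitP, invM₂, mul_apply, Fin.sum_univ_two, fromBlocks_transpose, fromBlocks_multiply,
      fromBlocks_add, ← fromBlocks_one, ← fromBlocks_zero]

theorem invM₂_mul_splitP : invM₂ transpose (splitP F n) * splitP F n = 1 := by
  ext1 i j
  fin_cases i <;> fin_cases j <;>
    simp [splitP, invM₂, mul_apply, Fin.sum_univ_two, fromBlocks_transpose, fromBlocks_multiply,
      fromBlocks_add, ← fromBlocks_one, ← fromBlocks_zero]

theorem splitP_congr : splitP F n * !![0, 1; 1, 0] * invM₂ transpose (splitP F n) =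
    !![0, 1; -1, 0] * (scalarUnitJn F n).val := by
  ext1 i j
  fin_cases i <;> fin_cases j <;>
    simp [splitP, scalarUnitJn, unitJn, Jn, invM₂, mul_apply, Fin.sum_univ_two,
      fromBlocks_transpose, fromBlocks_multiply, fromBlocks_add, fromBlocks_neg,
      ← fromBlocks_one, ← fromBlocks_zero]

end Split

theorem stmt3_general (F : Type) [Field F] (n : ℕ) :
    letI A := Matrix (Fin n ⊕ Fin n) (Fin n ⊕ Fin n) F
    letI Jplus : Matrix (Fin 2) (Fin 2) A := !![0, 1; 1, 0]
    letI Jminus : Matrix (Fin 2) (Fin 2) A := !![0, 1; -1, 0]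
    ∃ P Pinv : Matrix (Fin 2) (Fin 2) A,
      P * Pinv = 1 ∧ Pinv * P = 1 ∧
      ∀ T : Matrix (Fin 2) (Fin 2) A,
        T * Jplus * invM₂ Matrix.transpose T = Jplus ↔
          (P * T * Pinv) * Jminus * invM₂ tilde (P * T * Pinv) = Jminus := by
  let P : (Matrix (Fin 2) (Fin 2) (Matrix (Fin n ⊕ Fin n) (Fin n ⊕ Fin n) F))ˣ :=
    ⟨splitP F n, invM₂ transpose (splitP F n), splitP_mul_invM₂, invM₂_mul_splitP⟩
  exact ⟨P, ↑P⁻¹, P.mul_inv, P.inv_mul,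
    isometry_iff_conj_isometry invM₂_transpose_mul (invM₂_one transpose_zero transpose_one)
      _ invM₂_tilde P splitP_congr⟩

/-- The split orthogonal group `O_q(2n,2n) = SL_⋄^+(2, M_{2n}(F_q))` is
isomorphic to `SL_~^-(2, M_{2n}(F_q))`, where `a~ = J_{2n} aᵗ J_{2n}⁻¹`.  The
isomorphism is realized by conjugation by an invertible matrix `P`, which is
automatically a multiplicative bijection. -/
theorem stmt3 (F : Type) [Field F] [Fintype F] (n : ℕ) :
    letI A := Matrix (Fin n ⊕ Fin n) (Fin n ⊕ Fin n) F
    letI Jplus : Matrix (Fin 2) (Fin 2) A := !![0, 1; 1, 0]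
    letI Jminus : Matrix (Fin 2) (Fin 2) A := !![0, 1; -1, 0]
    ∃ P Pinv : Matrix (Fin 2) (Fin 2) A,
      P * Pinv = 1 ∧ Pinv * P = 1 ∧
      ∀ T : Matrix (Fin 2) (Fin 2) A,
        T * Jplus * invM₂ Matrix.transpose T = Jplus ↔
          (P * T * Pinv) * Jminus * invM₂ tilde (P * T * Pinv) = Jminus :=
  stmt3_general F n
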